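/- arXiv:1203.3777 — 5 statements merged into one kernel-verified Lean document; each statement's English description precedes it below -/
import Mathlib

section
/- Let n ≥ 1, c > 0, r ∈ ℕ, and let L : W_n → ℂ be a linear functional with L(h* h) ≥ 0 for all h ∈ W_n and L(g^r_c) ≤ 1. Then for all s, t ∈ ℕ^n with ‖s+t‖₁ ≤ r: L( ((a*)^s a^t)* (a*)^s a^t ) ≤ L( a^{s+t} (a^{s+t})* ) ≤ c^{‖s+t‖₁} · (n+‖s+t‖₁−1)! / (n−1)!. -/
open scoped ComplexOrder

noncomputable section

/-- The Weyl algebra `W_n`: a complex `*`-algebra generated by `a 1, …, a n` and their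
adjoints, satisfying the canonical commutation relations, in which the normally ordered
monomials `(a*)^s a^t` form a basis (this pins the algebra down up to `*`-isomorphism). -/
structure WeylAlgebra (n : ℕ) where
  carrier : Type
  [ring : Ring carrier]
  [alg : Algebra ℂ carrier]
  [starRing : StarRing carrier]
  [starModule : StarModule ℂ carrier]
  a : Fin n → carrier
  comm_aa : ∀ i j, a i * a j = a j * a i
  comm_ss : ∀ i j, star (a i) * star (a j) = star (a j) * star (a i)
  ccr : ∀ i j : Fin n, a i * star (a j) - star (a j) * a i = if i = j then 1 else 0
  basis : Module.Basis ((Fin n → ℕ) × (Fin n → ℕ)) ℂ carrier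
  basis_eq : ∀ st : (Fin n → ℕ) × (Fin n → ℕ),
    basis st = (List.ofFn fun i => star (a i) ^ st.1 i).prod *
               (List.ofFn fun i => (a i) ^ st.2 i).prod

attribute [instance] WeylAlgebra.ring WeylAlgebra.alg WeylAlgebra.starRing
  WeylAlgebra.starModule

namespace WeylAlgebra

variable {n : ℕ} (W : WeylAlgebra n)

/-- The monomial `a^t = ∏ i, (a i)^(t i)`. -/
def amon (t : Fin n → ℕ) : W.carrier := (List.ofFn fun i => W.a i ^ t i).prod

/-- The normally ordered monomial `(a*)^s a^t`. -/
def nmon (s t : Fin n → ℕ) : W.carrier :=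
  (List.ofFn fun i => star (W.a i) ^ s i).prod * (List.ofFn fun i => W.a i ^ t i).prod

/-- The `l₁`-norm of the coefficients of the (unique) normal form of `p`. -/
def l1 (p : W.carrier) : ℝ := (W.basis.repr p).sum fun _ c => ‖c‖

/-- The degree of `p`: the maximal `‖s‖₁ + ‖t‖₁` over monomials appearing in the normal
form of `p`. -/
def deg (p : W.carrier) : ℕ :=
  (W.basis.repr p).support.sup fun st => (∑ i, st.1 i) + (∑ i, st.2 i)

/-- `p` is a sum of squares, i.e. `p ∈ Σ²`. -/
def IsSOS (p : W.carrier) : Prop :=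
  ∃ (N : ℕ) (f : Fin N → W.carrier), p = ∑ i, star (f i) * f i

/-- `p ∈ Σ²_k`: `p` is a sum of squares of elements of degree at most `k`. -/
def IsSOSdeg (k : ℕ) (p : W.carrier) : Prop :=
  ∃ (N : ℕ) (f : Fin N → W.carrier), (∀ i, W.deg (f i) ≤ k) ∧ p = ∑ i, star (f i) * f i

/-- The element `g^r_c = ∑_{‖t‖₁ ≤ r} (n-1)!/(c^{‖t‖₁} (n+‖t‖₁-1)!) • a^t (a^t)*`. -/
def gpoly (c : ℝ) (r : ℕ) : W.carrier :=
  ∑ t ∈ (Fintype.piFinset fun _ : Fin n => Finset.range (r + 1)).filter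
      (fun t => ∑ i, t i ≤ r),
    ((Nat.factorial (n - 1) : ℂ) /
        ((c : ℂ) ^ (∑ i, t i) * (Nat.factorial (n + (∑ i, t i) - 1) : ℂ))) •
      (W.amon t * star (W.amon t))

/-- The value in `W` of a single letter (`Sum.inl i ↦ a i`, `Sum.inr i ↦ (a i)*`). -/
def letterVal : Fin n ⊕ Fin n → W.carrier
  | Sum.inl i => W.a i
  | Sum.inr i => star (W.a i)

/-- The value in `W` of a word (monomial) in the letters `a_1,…,a_n,a_1*,…,a_n*`. -/
def wordVal (w : List (Fin n ⊕ Fin n)) : W.carrier := (w.map W.letterVal).prod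

end WeylAlgebra

/-- The domain of the Schrödinger representation: finitely supported functions
`ℕ^n → ℂ`. -/
abbrev DSpace (n : ℕ) := (Fin n → ℕ) →₀ ℂ

/-- The number basis vector `e_m`. -/
def eVec {n : ℕ} (m : Fin n → ℕ) : DSpace n := Finsupp.single m 1

/-- The inner product `⟨f, g⟩ = ∑_m conj (f m) * g m` on `DSpace n`
(antilinear in the first argument). -/
def innerD {n : ℕ} (f g : DSpace n) : ℂ := f.sum fun m c => (starRingEnd ℂ) c * g m

/-- The Schrödinger (Fock) representation of the Weyl algebra `W` on `DSpace n`,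
specified by its action on the number basis. -/
structure Schrodinger {n : ℕ} (W : WeylAlgebra n) where
  rep : W.carrier →ₐ[ℂ] Module.End ℂ (DSpace n)
  rep_a : ∀ (i : Fin n) (m : Fin n → ℕ),
    rep (W.a i) (eVec m) =
      (Real.sqrt (m i) : ℂ) • eVec (Function.update m i (m i - 1))
  rep_astar : ∀ (i : Fin n) (m : Fin n → ℕ),
    rep (star (W.a i)) (eVec m) =
      (Real.sqrt (m i + 1) : ℂ) • eVec (Function.update m i (m i + 1))

namespace Schrodinger

variable {n : ℕ} {W : WeylAlgebra n} (S : Schrodinger W)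

/-- `π(p) ≥ 0`: the quadratic form of `π(p)` is nonnegative on the domain. -/
def PiNonneg (p : W.carrier) : Prop := ∀ φ : DSpace n, 0 ≤ innerD φ (S.rep p φ)

/-- The set of energies `⟨φ, π(p) φ⟩` over normalized `φ` in the domain. -/
def energySet (p : W.carrier) : Set ℝ :=
  { x | ∃ φ : DSpace n, innerD φ φ = 1 ∧ (innerD φ (S.rep p φ)).re = x }

/-- `λ_inf(p)`, the infimum of `⟨φ, π(p) φ⟩` over normalized `φ`. -/
def lambdaInf (p : W.carrier) : ℝ := sInf (S.energySet p)

end Schrodinger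

/-! Let `C` be the additive monoid generated by the normally ordered squares `(a^k)* a^k`; a
positive functional is nonnegative on `C`. Conjugation `x ↦ a_i* x a_i` maps `C` into itself,
and the canonical commutation relations give `a_i x a_i* - a_i* x a_i ∈ C` for `x ∈ C`: for
`x = (a^k)* a^k` the difference is `(2 k_i + 1) (a^k)* a^k + k_i² (a^{k-e_i})* a^{k-e_i}`.
Starting from `a^s (a^s)* ∈ C` and conjugating by `a^t` and by `(a^t)*` one letter at a time
shows `a^{s+t} (a^{s+t})* - (a^t)* a^s (a^s)* a^t ∈ C`, and `(a^t)* a^s (a^s)* a^t` is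
`((a*)^s a^t)* (a*)^s a^t`. For the second inequality, the terms of `L(g^r_c)` are nonnegative,
so the one of index `s + t` is at most 1. -/

theorem Pi.add_single_induction {ι : Type*} [Finite ι] [DecidableEq ι] {P : (ι → ℕ) → Prop}
    (zero : P 0) (add_single : ∀ t i, P t → P (t + Pi.single i 1)) (t : ι → ℕ) : P t := by
  suffices h : ∀ u, P u → P (u + t) by simpa using h 0 zero
  induction t using Pi.single_induction with
  | zero => simp
  | add f g hf hg => exact fun u hu => add_assoc u f g ▸ hg _ (hf u hu)
  | single i m =>
    induction m with
    | zero => simp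
    | succ m ih =>
      intro u hu
      simpa only [add_assoc, ← Pi.single_add] using add_single _ i (ih u hu)

theorem Pi.apply_eq_zero_or_exists_eq_add_single {ι : Type*} [DecidableEq ι] (k : ι → ℕ)
    (i : ι) : k i = 0 ∨ ∃ k', k = k' + (Pi.single i 1 : ι → ℕ) := by
  refine or_iff_not_imp_left.mpr fun hk => ⟨k - Pi.single i 1, funext fun j => ?_⟩
  rcases eq_or_ne j i with rfl | hji
  · simp only [Pi.add_apply, Pi.sub_apply, Pi.single_eq_same]
    omega
  · simp [hji]

section CommutingMonomials

variable {M : Type*} [Monoid M] {n : ℕ} {x : Fin n → M}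

theorem commute_list_ofFn_prod_pow {y : M} {k : Fin n → ℕ} (h : ∀ i, Commute y (x i ^ k i)) :
    Commute y (List.ofFn fun i => x i ^ k i).prod :=
  Commute.list_prod_right _ _ fun _ hz => by
    obtain ⟨i, rfl⟩ := List.mem_ofFn.mp hz
    exact h i

theorem list_ofFn_prod_pow_add (hx : ∀ i j, Commute (x i) (x j)) (k l : Fin n → ℕ) :
    (List.ofFn fun i => x i ^ (k + l) i).prod =
      (List.ofFn fun i => x i ^ k i).prod * (List.ofFn fun i => x i ^ l i).prod := by
  induction n with
  | zero => simp
  | succ n ih =>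
    have hc : Commute (x 0 ^ l 0) (List.ofFn fun i => x i.succ ^ k i.succ).prod :=
      commute_list_ofFn_prod_pow fun i => (hx 0 i.succ).pow_pow _ _
    have ih' := ih (fun i j => hx i.succ j.succ) (fun i => k i.succ) (fun i => l i.succ)
    simp only [List.ofFn_succ, List.prod_cons, Pi.add_apply] at ih' ⊢
    rw [ih', pow_add, mul_assoc, mul_assoc, ← mul_assoc (x 0 ^ l 0), hc.eq, mul_assoc]

theorem list_ofFn_prod_pow_single (i : Fin n) (m : ℕ) :
    (List.ofFn fun j => x j ^ (Pi.single i m : Fin n → ℕ) j).prod = x i ^ m := by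
  induction n with
  | zero => exact i.elim0
  | succ n ih =>
    cases i using Fin.cases with
    | zero => simp [List.ofFn_succ, Pi.single_apply, Fin.succ_ne_zero]
    | succ i =>
      rw [List.ofFn_succ, List.prod_cons, Pi.single_eq_of_ne (Fin.succ_ne_zero i).symm, pow_zero,
        one_mul, ← ih (x := fun j => x j.succ) i]
      simp [Pi.single_apply]

theorem star_list_ofFn_prod_pow [StarMul M] (hx : ∀ i j, Commute (x i) (x j)) (k : Fin n → ℕ) :
    star (List.ofFn fun i => x i ^ k i).prod = (List.ofFn fun i => star (x i) ^ k i).prod := by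
  induction n with
  | zero => simp
  | succ n ih =>
    have hc : Commute (star (x 0) ^ k 0) (List.ofFn fun i => star (x i.succ) ^ k i.succ).prod :=
      commute_list_ofFn_prod_pow fun i => ((hx 0 i.succ).star_star).pow_pow _ _
    simp only [List.ofFn_succ, List.prod_cons, star_mul, star_pow,
      ih (fun i j => hx i.succ j.succ), hc.eq]

end CommutingMonomials

namespace WeylAlgebra

variable {n : ℕ} (W : WeylAlgebra n)

theorem commute_a_a (i j : Fin n) : Commute (W.a i) (W.a j) := W.comm_aa i j

theorem commute_a_star_a {i j : Fin n} (hij : i ≠ j) : Commute (W.a i) (star (W.a j)) :=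
  sub_eq_zero.mp (by simpa [hij] using W.ccr i j)

theorem a_mul_star_a (i : Fin n) : W.a i * star (W.a i) = star (W.a i) * W.a i + 1 := by
  simpa [sub_eq_iff_eq_add'] using W.ccr i i

theorem amon_zero : W.amon 0 = 1 := by
  simp [amon]

theorem amon_add (k l : Fin n → ℕ) : W.amon (k + l) = W.amon k * W.amon l :=
  list_ofFn_prod_pow_add W.commute_a_a k l

theorem amon_single (i : Fin n) : W.amon (Pi.single i 1) = W.a i := by
  rw [amon, list_ofFn_prod_pow_single, pow_one]

theorem commute_a_amon (i : Fin n) (k : Fin n → ℕ) : Commute (W.a i) (W.amon k) :=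
  commute_list_ofFn_prod_pow fun j => (W.commute_a_a i j).pow_right _

theorem commute_amon_star_a {k : Fin n → ℕ} {i : Fin n} (hk : k i = 0) :
    Commute (W.amon k) (star (W.a i)) := by
  refine (commute_list_ofFn_prod_pow fun j => ?_).symm
  rcases eq_or_ne j i with rfl | hji
  · simp [hk]
  · exact (W.commute_a_star_a hji).symm.pow_right _

theorem nmon_eq (s t : Fin n → ℕ) : W.nmon s t = star (W.amon s) * W.amon t := by
  rw [amon, star_list_ofFn_prod_pow W.commute_a_a, nmon, amon]

theorem conj_amon_add_single (x : W.carrier) (t : Fin n → ℕ) (i : Fin n) :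
    W.amon (t + Pi.single i 1) * x * star (W.amon (t + Pi.single i 1)) =
      W.a i * (W.amon t * x * star (W.amon t)) * star (W.a i) := by
  rw [amon_add, amon_single, ← (W.commute_a_amon i t).eq, star_mul]
  noncomm_ring

theorem conj_star_amon_add_single (x : W.carrier) (t : Fin n → ℕ) (i : Fin n) :
    star (W.amon (t + Pi.single i 1)) * x * W.amon (t + Pi.single i 1) =
      star (W.a i) * (star (W.amon t) * x * W.amon t) * W.a i := by
  rw [amon_add, amon_single, star_mul]
  noncomm_ring

theorem amon_add_single_mul_star_a_sub (k : Fin n → ℕ) (i : Fin n) :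
    W.amon (k + Pi.single i 1) * star (W.a i) - star (W.a i) * W.amon (k + Pi.single i 1) =
      (k i + 1) • W.amon k := by
  induction k using Pi.add_single_induction with
  | zero => simp [amon_single, amon_zero, W.a_mul_star_a]
  | add_single k j ih =>
    have hsplit : W.amon (k + Pi.single j 1 + Pi.single i 1) =
        W.amon (k + Pi.single i 1) * W.a j := by
      rw [add_right_comm, amon_add, amon_single]
    have hleibniz (x y z : W.carrier) :
        x * y * z - z * (x * y) = x * (y * z - z * y) + (x * z - z * x) * y := by
      noncomm_ring
    rw [hsplit, hleibniz, ih, W.ccr j i, smul_mul_assoc, ← amon_single, ← amon_add]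
    rcases eq_or_ne j i with rfl | hji
    · simp only [if_true, mul_one, Pi.add_apply, Pi.single_eq_same]
      module
    · simp [hji]

theorem conj_a_sub_conj_star_a {A D : W.carrier} {i : Fin n} (hA : Commute (W.a i) A)
    (hD : A * star (W.a i) = star (W.a i) * A + D) :
    W.a i * (star A * A) * star (W.a i) - star (W.a i) * (star A * A) * W.a i =
      star A * A + star A * (W.a i * D) + star (W.a i * D) * A + star D * D := by
  have hD' : W.a i * star A = star A * W.a i + star D := by
    simpa only [star_mul, star_star, star_add] using congrArg star hD
  have hA' : star (W.a i) * star A = star A * star (W.a i) := by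
    simpa only [star_mul] using congrArg star hA.eq.symm
  calc W.a i * (star A * A) * star (W.a i) - star (W.a i) * (star A * A) * W.a i
      = (W.a i * star A) * (A * star (W.a i)) - (star (W.a i) * star A) * (A * W.a i) := by
        noncomm_ring
    _ = (star A * W.a i + star D) * (star (W.a i) * A + D)
          - (star A * star (W.a i)) * (W.a i * A) := by
        rw [hD, hD', hA', hA.eq]
    _ = star A * (W.a i * star (W.a i) - star (W.a i) * W.a i) * A
          + star A * (W.a i * D) + star D * star (W.a i) * A + star D * D := by
        noncomm_ring
    _ = _ := by
        rw [W.a_mul_star_a, add_sub_cancel_left, mul_one, star_mul]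

def squareCone : AddSubmonoid W.carrier :=
  AddSubmonoid.closure (Set.range fun k => star (W.amon k) * W.amon k)

theorem star_amon_mul_amon_mem (k : Fin n → ℕ) :
    star (W.amon k) * W.amon k ∈ W.squareCone :=
  AddSubmonoid.subset_closure ⟨k, rfl⟩

theorem map_mem_squareCone (f : W.carrier →+ W.carrier)
    (hf : ∀ k, f (star (W.amon k) * W.amon k) ∈ W.squareCone) {x : W.carrier}
    (hx : x ∈ W.squareCone) : f x ∈ W.squareCone :=
  (AddSubmonoid.closure_le (S := W.squareCone.comap f)).mpr (Set.range_subset_iff.mpr hf) hx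

theorem apply_nonneg_of_mem_squareCone (L : W.carrier →ₗ[ℂ] ℂ)
    (hpos : ∀ h : W.carrier, 0 ≤ L (star h * h)) {x : W.carrier} (hx : x ∈ W.squareCone) :
    0 ≤ L x :=
  (AddSubmonoid.closure_le (S := (AddSubmonoid.nonneg ℂ).comap L.toAddMonoidHom)).mpr
    (Set.range_subset_iff.mpr fun _ => hpos _) hx

theorem conj_star_a_mem {x : W.carrier} (i : Fin n) (hx : x ∈ W.squareCone) :
    star (W.a i) * x * W.a i ∈ W.squareCone := by
  refine W.map_mem_squareCone (LinearMap.mulLeftRight ℂ (star (W.a i), W.a i)).toAddMonoidHom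
    (fun k => ?_) hx
  have h := W.conj_star_amon_add_single 1 k i
  simp only [mul_one] at h
  simpa [← h] using W.star_amon_mul_amon_mem (k + Pi.single i 1)

theorem conj_a_sub_conj_star_a_mem {x : W.carrier} (i : Fin n) (hx : x ∈ W.squareCone) :
    W.a i * x * star (W.a i) - star (W.a i) * x * W.a i ∈ W.squareCone := by
  refine W.map_mem_squareCone (LinearMap.mulLeftRight ℂ (W.a i, star (W.a i)) -
    LinearMap.mulLeftRight ℂ (star (W.a i), W.a i)).toAddMonoidHom (fun k => ?_) hx
  simp only [LinearMap.toAddMonoidHom_coe, LinearMap.sub_apply, LinearMap.mulLeftRight_apply]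
  obtain hk | ⟨k, rfl⟩ := Pi.apply_eq_zero_or_exists_eq_add_single k i
  · rw [W.conj_a_sub_conj_star_a (W.commute_a_amon i k) (D := 0)
      (by simp [(W.commute_amon_star_a hk).eq])]
    simpa using W.star_amon_mul_amon_mem k
  · have hD := sub_eq_iff_eq_add'.mp (W.amon_add_single_mul_star_a_sub k i)
    have haD : W.a i * ((k i + 1) • W.amon k) = (k i + 1) • W.amon (k + Pi.single i 1) := by
      rw [mul_smul_comm, amon_add, amon_single, (W.commute_a_amon i k).eq]
    rw [W.conj_a_sub_conj_star_a (W.commute_a_amon i _) hD, haD]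
    simp only [star_smul, star_trivial, mul_smul_comm, smul_mul_assoc, smul_smul]
    have hA := W.star_amon_mul_amon_mem (k + Pi.single i 1)
    exact add_mem (add_mem (add_mem hA (nsmul_mem hA _)) (nsmul_mem hA _))
      (nsmul_mem (W.star_amon_mul_amon_mem k) _)

theorem conj_a_mem {x : W.carrier} (i : Fin n) (hx : x ∈ W.squareCone) :
    W.a i * x * star (W.a i) ∈ W.squareCone := by
  simpa using add_mem (W.conj_a_sub_conj_star_a_mem i hx) (W.conj_star_a_mem i hx)

theorem conj_star_amon_mem {x : W.carrier} (hx : x ∈ W.squareCone) (t : Fin n → ℕ) :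
    star (W.amon t) * x * W.amon t ∈ W.squareCone := by
  induction t using Pi.add_single_induction with
  | zero => simpa [amon_zero] using hx
  | add_single t i ih =>
    rw [conj_star_amon_add_single]
    exact W.conj_star_a_mem i ih

theorem conj_amon_sub_conj_star_amon_mem {x : W.carrier} (hx : x ∈ W.squareCone)
    (t : Fin n → ℕ) :
    W.amon t * x * star (W.amon t) - star (W.amon t) * x * W.amon t ∈ W.squareCone := by
  induction t using Pi.add_single_induction with
  | zero => simp [amon_zero]
  | add_single t i ih =>
    convert add_mem (W.conj_a_mem i ih)
      (W.conj_a_sub_conj_star_a_mem i (W.conj_star_amon_mem hx t)) using 1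
    rw [conj_amon_add_single, conj_star_amon_add_single]
    noncomm_ring

theorem amon_mul_star_amon_mem (s : Fin n → ℕ) : W.amon s * star (W.amon s) ∈ W.squareCone := by
  have h1 : (1 : W.carrier) ∈ W.squareCone := by
    simpa [amon_zero] using W.star_amon_mul_amon_mem 0
  simpa using add_mem (W.conj_amon_sub_conj_star_amon_mem h1 s) (W.conj_star_amon_mem h1 s)

open Nat in
theorem apply_amon_mul_star_amon_le {c : ℝ} (hc : 0 < c) {r : ℕ} (L : W.carrier →ₗ[ℂ] ℂ)
    (hpos : ∀ h : W.carrier, 0 ≤ L (star h * h)) (hg : L (W.gpoly c r) ≤ 1)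
    {v : Fin n → ℕ} (hv : ∑ i, v i ≤ r) :
    L (W.amon v * star (W.amon v)) ≤
      (c : ℂ) ^ (∑ i, v i) * ((n + ∑ i, v i - 1)! : ℂ) / ((n - 1)! : ℂ) := by
  set w : (Fin n → ℕ) → ℂ := fun u =>
    ((n - 1)! : ℂ) / ((c : ℂ) ^ (∑ i, u i) * ((n + ∑ i, u i - 1)! : ℂ)) with hw
  have hc' : (0 : ℂ) < c := Complex.zero_lt_real.mpr hc
  have hfact (m : ℕ) : (0 : ℂ) < (m ! : ℂ) := Nat.cast_pos.mpr m.factorial_pos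
  have hw_pos (u : Fin n → ℕ) : 0 < w u :=
    div_pos (hfact _) (mul_pos (pow_pos hc' _) (hfact _))
  have hterm_nonneg (u : Fin n → ℕ) : 0 ≤ w u * L (W.amon u * star (W.amon u)) :=
    mul_nonneg (hw_pos u).le (by simpa using hpos (star (W.amon u)))
  have hv_mem : v ∈ (Fintype.piFinset fun _ : Fin n => Finset.range (r + 1)).filter
      (fun t => ∑ i, t i ≤ r) := by
    refine Finset.mem_filter.mpr ⟨Fintype.mem_piFinset.mpr fun i => ?_, hv⟩
    exact Finset.mem_range_succ_iff.mpr
      ((Finset.single_le_sum (by simp) (Finset.mem_univ i)).trans hv)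
  have hle : w v * L (W.amon v * star (W.amon v)) ≤ 1 := by
    refine le_trans ?_ hg
    rw [gpoly, map_sum]
    simp only [map_smul, smul_eq_mul]
    exact Finset.single_le_sum (fun u _ => hterm_nonneg u) hv_mem
  rw [le_div_iff₀ (hfact _), mul_comm]
  rwa [hw, div_mul_eq_mul_div, div_le_one₀ (mul_pos (pow_pos hc' _) (hfact _))] at hle

end WeylAlgebra

theorem moment_matrix_diag_bound_general {n : ℕ} (c : ℝ) (hc : 0 < c) (r : ℕ)
    (W : WeylAlgebra n) (L : W.carrier →ₗ[ℂ] ℂ)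
    (hpos : ∀ h : W.carrier, 0 ≤ L (star h * h))
    (hg : L (W.gpoly c r) ≤ 1)
    (s t : Fin n → ℕ) (hst : ∑ i, (s i + t i) ≤ r) :
    L (star (W.nmon s t) * W.nmon s t) ≤ L (W.amon (s + t) * star (W.amon (s + t))) ∧
    L (W.amon (s + t) * star (W.amon (s + t))) ≤
      (c : ℂ) ^ (∑ i, (s i + t i)) *
        (Nat.factorial (n + (∑ i, (s i + t i)) - 1) : ℂ) /
        (Nat.factorial (n - 1) : ℂ) := by
  refine ⟨?_, W.apply_amon_mul_star_amon_le hc L hpos hg hst⟩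
  have hsq : star (W.nmon s t) * W.nmon s t =
      star (W.amon t) * (W.amon s * star (W.amon s)) * W.amon t := by
    rw [W.nmon_eq, star_mul, star_star]
    noncomm_ring
  have hconj : W.amon (s + t) * star (W.amon (s + t)) =
      W.amon t * (W.amon s * star (W.amon s)) * star (W.amon t) := by
    rw [add_comm, W.amon_add, star_mul]
    noncomm_ring
  rw [← sub_nonneg, ← map_sub, hsq, hconj]
  exact W.apply_nonneg_of_mem_squareCone L hpos
    (W.conj_amon_sub_conj_star_amon_mem (W.amon_mul_star_amon_mem s) t)

/-- If `L` is a positive linear functional with `L(g^r_c) ≤ 1`, then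
for `‖s+t‖₁ ≤ r` one has
`L(((a*)^s a^t)* (a*)^s a^t) ≤ L(a^{s+t}(a^{s+t})*) ≤ c^{‖s+t‖₁}·(n+‖s+t‖₁-1)!/(n-1)!`. -/
theorem moment_matrix_diag_bound {n : ℕ} (hn : 1 ≤ n) (c : ℝ) (hc : 0 < c) (r : ℕ)
    (W : WeylAlgebra n) (L : W.carrier →ₗ[ℂ] ℂ)
    (hpos : ∀ h : W.carrier, 0 ≤ L (star h * h))
    (hg : L (W.gpoly c r) ≤ 1)
    (s t : Fin n → ℕ) (hst : ∑ i, (s i + t i) ≤ r) :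
    L (star (W.nmon s t) * W.nmon s t) ≤ L (W.amon (s + t) * star (W.amon (s + t))) ∧
    L (W.amon (s + t) * star (W.amon (s + t))) ≤
      (c : ℂ) ^ (∑ i, (s i + t i)) *
        (Nat.factorial (n + (∑ i, (s i + t i)) - 1) : ℂ) /
        (Nat.factorial (n - 1) : ℂ) :=
  moment_matrix_diag_bound_general c hc r W L hpos hg s t hst
end
end

section
/- Let n ≥ 1, M ∈ ℕ, let s ∈ W_n be a monomial of length |s|, and let m, m' ∈ ℕ^n with all entries of m and m' at most M. Then ⟨e_m, π(s s*) e_{m'}⟩ = 0 whenever m ≠ m', and |⟨e_m, π(s s*) e_m⟩| ≤ (|s|+M)! / M!. -/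
open scoped ComplexOrder

noncomputable section

/-!
Each letter `ℓ` maps number states to multiples of number states, and `π(ℓ) π(ℓ*)` is a
number operator `N_i + 1` or `N_i`. Peeling off the first letter of `s = ℓ s'`, the operator
`π(s s*) = π(ℓ) π(s' s'*) π(ℓ*)` therefore acts diagonally on `e_m`, with eigenvalue a product
of `|s|` occupation numbers. Each letter raises an occupation number by at most one, so the
`k`-th factor is at most `M + k`, and the eigenvalue is at most `(M + 1) ⋯ (M + |s|)`.
-/

open Function

namespace WeylAlgebra

variable {n : ℕ} (W : WeylAlgebra n)

lemma wordVal_cons (l : Fin n ⊕ Fin n) (w : List (Fin n ⊕ Fin n)) :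
    W.wordVal (l :: w) = W.letterVal l * W.wordVal w := by
  simp [wordVal]

end WeylAlgebra

lemma innerD_eVec_left {n : ℕ} (m : Fin n → ℕ) (g : DSpace n) : innerD (eVec m) g = g m := by
  simp [innerD, eVec]

namespace Schrodinger

variable {n : ℕ}

-- For `m i = 0` the truncated `m i - 1` is harmless: `letterWeight` then vanishes.
def letterShift : Fin n ⊕ Fin n → (Fin n → ℕ) → (Fin n → ℕ)
  | Sum.inl i, m => update m i (m i + 1)
  | Sum.inr i, m => update m i (m i - 1)

def letterWeight : Fin n ⊕ Fin n → (Fin n → ℕ) → ℕ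
  | Sum.inl i, m => m i + 1
  | Sum.inr i, m => m i

def wordWeight : List (Fin n ⊕ Fin n) → (Fin n → ℕ) → ℕ
  | [], _ => 1
  | l :: w, m => letterWeight l m * wordWeight w (letterShift l m)

lemma letterShift_le_succ (l : Fin n ⊕ Fin n) {m : Fin n → ℕ} {M : ℕ} (hm : ∀ i, m i ≤ M)
    (j : Fin n) : letterShift l m j ≤ M + 1 := by
  have hmj := hm j
  rcases l with i | i <;> simp only [letterShift, update_apply] <;> split_ifs with h
  all_goals first | omega | (subst h; omega)

lemma letterWeight_le_succ (l : Fin n ⊕ Fin n) {m : Fin n → ℕ} {M : ℕ} (hm : ∀ i, m i ≤ M) :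
    letterWeight l m ≤ M + 1 := by
  cases l with
  | inl i => exact Nat.succ_le_succ (hm i)
  | inr i => exact (hm i).trans M.le_succ

lemma wordWeight_mul_factorial_le (w : List (Fin n ⊕ Fin n)) {m : Fin n → ℕ} {M : ℕ}
    (hm : ∀ i, m i ≤ M) : wordWeight w m * M.factorial ≤ (w.length + M).factorial := by
  induction w generalizing m M with
  | nil => simp [wordWeight]
  | cons l w ih =>
    calc wordWeight (l :: w) m * M.factorial
        = letterWeight l m * M.factorial * wordWeight w (letterShift l m) := by
          simp only [wordWeight]; ring
      _ ≤ (M + 1).factorial * wordWeight w (letterShift l m) := by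
          rw [Nat.factorial_succ]
          gcongr
          exact letterWeight_le_succ l hm
      _ ≤ ((l :: w).length + M).factorial := by
          rw [mul_comm, List.length_cons, add_right_comm, add_assoc]
          exact ih (letterShift_le_succ l hm)

variable {W : WeylAlgebra n} (S : Schrodinger W)

lemma rep_star_letterVal_eVec (l : Fin n ⊕ Fin n) (m : Fin n → ℕ) :
    S.rep (star (W.letterVal l)) (eVec m) =
      (Real.sqrt (letterWeight l m) : ℂ) • eVec (letterShift l m) := by
  cases l with
  | inl i => simpa [WeylAlgebra.letterVal, letterWeight, letterShift] using S.rep_astar i m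
  | inr i => simpa [WeylAlgebra.letterVal, letterWeight, letterShift] using S.rep_a i m

lemma rep_a_rep_astar_eVec (i : Fin n) (m : Fin n → ℕ) :
    S.rep (W.a i) (S.rep (star (W.a i)) (eVec m)) = ((m i + 1 : ℕ) : ℂ) • eVec m := by
  rw [S.rep_astar, map_smul, S.rep_a, smul_smul]
  simp only [update_self, update_idem, Nat.add_sub_cancel, update_eq_self]
  congr 1
  push_cast
  rw [← Complex.ofReal_mul, Real.mul_self_sqrt (by positivity)]
  norm_cast

lemma rep_astar_rep_a_eVec (i : Fin n) (m : Fin n → ℕ) :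
    S.rep (star (W.a i)) (S.rep (W.a i) (eVec m)) = (m i : ℂ) • eVec m := by
  rw [S.rep_a, map_smul]
  cases h : m i with
  | zero => simp
  | succ k =>
    rw [S.rep_astar, smul_smul]
    simp only [update_self, update_idem, Nat.add_sub_cancel]
    rw [← h, update_eq_self, h]
    push_cast
    rw [← Complex.ofReal_mul, Real.mul_self_sqrt (by positivity)]
    norm_cast

lemma rep_letterVal_rep_star_eVec (l : Fin n ⊕ Fin n) (m : Fin n → ℕ) :
    S.rep (W.letterVal l) (S.rep (star (W.letterVal l)) (eVec m)) =
      (letterWeight l m : ℂ) • eVec m := by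
  cases l with
  | inl i => exact S.rep_a_rep_astar_eVec i m
  | inr i => simpa [WeylAlgebra.letterVal, letterWeight] using S.rep_astar_rep_a_eVec i m

theorem rep_wordVal_mul_star_eVec (w : List (Fin n ⊕ Fin n)) (m : Fin n → ℕ) :
    S.rep (W.wordVal w * star (W.wordVal w)) (eVec m) = (wordWeight w m : ℂ) • eVec m := by
  induction w generalizing m with
  | nil => simp [WeylAlgebra.wordVal, wordWeight]
  | cons l w ih =>
    have hsplit : W.wordVal (l :: w) * star (W.wordVal (l :: w)) =
        W.letterVal l * (W.wordVal w * star (W.wordVal w)) * star (W.letterVal l) := by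
      rw [W.wordVal_cons, star_mul]; simp only [mul_assoc]
    have hnumber := S.rep_letterVal_rep_star_eVec l m
    rw [S.rep_star_letterVal_eVec] at hnumber
    rw [hsplit, map_mul, map_mul, Module.End.mul_apply, Module.End.mul_apply,
      S.rep_star_letterVal_eVec, map_smul, ih, smul_comm, map_smul, hnumber, smul_smul,
      wordWeight, Nat.cast_mul, mul_comm]

end Schrodinger

theorem matrix_element_bound_general {n : ℕ} (W : WeylAlgebra n)
    (S : Schrodinger W) (M : ℕ) (w : List (Fin n ⊕ Fin n))
    (m m' : Fin n → ℕ) (hm : ∀ i, m i ≤ M) :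
    (m ≠ m' →
      innerD (eVec m) (S.rep (W.wordVal w * star (W.wordVal w)) (eVec m')) = 0) ∧
    ‖innerD (eVec m) (S.rep (W.wordVal w * star (W.wordVal w)) (eVec m))‖
      ≤ (Nat.factorial (w.length + M) : ℝ) / (Nat.factorial M : ℝ) := by
  simp only [S.rep_wordVal_mul_star_eVec, innerD_eVec_left]
  refine ⟨fun hne => by simp [eVec, hne.symm], ?_⟩
  rw [eVec, Finsupp.smul_apply, Finsupp.single_eq_same, smul_eq_mul, mul_one,
    Complex.norm_natCast, le_div_iff₀ (by positivity)]
  exact_mod_cast Schrodinger.wordWeight_mul_factorial_le w hm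

/-- For a monomial `s` (word `w`) and number states `e_m, e_{m'}`
with all entries at most `M`: `⟨e_m, π(s s*) e_{m'}⟩ = 0` when `m ≠ m'`, and
`|⟨e_m, π(s s*) e_m⟩| ≤ (|s|+M)!/M!`. -/
theorem matrix_element_bound {n : ℕ} (hn : 1 ≤ n) (W : WeylAlgebra n)
    (S : Schrodinger W) (M : ℕ) (w : List (Fin n ⊕ Fin n))
    (m m' : Fin n → ℕ) (hm : ∀ i, m i ≤ M) (hm' : ∀ i, m' i ≤ M) :
    (m ≠ m' →
      innerD (eVec m) (S.rep (W.wordVal w * star (W.wordVal w)) (eVec m')) = 0) ∧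
    ‖innerD (eVec m) (S.rep (W.wordVal w * star (W.wordVal w)) (eVec m))‖
      ≤ (Nat.factorial (w.length + M) : ℝ) / (Nat.factorial M : ℝ) :=
  matrix_element_bound_general W S M w m m' hm
end
end

section
/- Let n ≥ 1, c > 1, M ∈ ℕ, and let Φ = Σ_{m ∈ ℕ^n, ‖m‖∞ ≤ M} d_m e_m ∈ D be a normalized vector (Σ_m |d_m|² = 1) supported on number states whose entries are all at most M. Then for every r ∈ ℕ: ⟨Φ, π(g^r_c) Φ⟩ ≤ (c/(c−1))^{M+1}. -/
open scoped ComplexOrder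

noncomputable section

/-! The number states `e_m` diagonalise `π(a^t (a^t)*)`, with eigenvalue
`∏ᵢ (mᵢ + 1)(mᵢ + 2)⋯(mᵢ + tᵢ)`, so `π(g^r_c)` is diagonal and `⟨Φ, π(g^r_c) Φ⟩` is a convex
combination of its eigenvalues at the `m` with `‖m‖∞ ≤ M`. Raising every `mᵢ` to `M` and merging
the rising factorials gives at most `(M + 1)(M + 2)⋯(M + ‖t‖₁)` per multi-index. The coefficients
of `g^r_c` are chosen so that the `C(n + k - 1, k)` multi-indices of degree `k` then contribute
`C(M + k, k) c⁻ᵏ` in total, and the negative binomial series sums these to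
`(1 - 1/c)^-(M + 1) = (c/(c - 1))^(M + 1)`. -/

open Finset

theorem star_list_prod {R : Type*} [Monoid R] [StarMul R] (L : List R) :
    star L.prod = (L.map star).reverse.prod :=
  unop_map_list_prod (starMulEquiv (R := R)) L

theorem list_prod_map_apply_eVec {n : ℕ} (T : Fin n → Module.End ℂ (DSpace n))
    (w : Fin n → ℕ → ℂ) (s : Fin n → ℕ → ℕ)
    (hT : ∀ i m, T i (eVec m) = w i (m i) • eVec (Function.update m i (s i (m i))))
    {L : List (Fin n)} (hL : L.Nodup) (m : Fin n → ℕ) :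
    (L.map T).prod (eVec m) =
      (L.map fun i => w i (m i)).prod • eVec (fun j => if j ∈ L then s j (m j) else m j) := by
  induction L with
  | nil => simp
  | cons a L ih =>
    obtain ⟨haL, hL⟩ := List.nodup_cons.1 hL
    rw [List.map_cons, List.prod_cons, Module.End.mul_apply, ih hL, map_smul, hT, smul_smul,
      List.map_cons, List.prod_cons, if_neg haL, mul_comm]
    congr 2
    funext j
    by_cases hj : j = a
    · subst hj; simp
    · simp [hj]

theorem list_prod_map_apply_eVec_of_mem {n : ℕ} (T : Fin n → Module.End ℂ (DSpace n))
    (w : Fin n → ℕ → ℂ) (s : Fin n → ℕ → ℕ)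
    (hT : ∀ i m, T i (eVec m) = w i (m i) • eVec (Function.update m i (s i (m i))))
    {L : List (Fin n)} (hL : L.Nodup) (hmem : ∀ i, i ∈ L) (m : Fin n → ℕ) :
    (L.map T).prod (eVec m) = (∏ i, w i (m i)) • eVec (fun j => s j (m j)) := by
  classical
  have huniv : L.toFinset = univ := Finset.eq_univ_of_forall fun i => List.mem_toFinset.2 (hmem i)
  rw [list_prod_map_apply_eVec T w s hT hL, ← List.prod_toFinset _ hL, huniv]
  simp only [hmem, if_true]

def multiIndicesDegLE (n r : ℕ) : Finset (Fin n → ℕ) :=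
  (Fintype.piFinset fun _ : Fin n => range (r + 1)).filter (fun t => ∑ i, t i ≤ r)

def gpolyCoeff (n : ℕ) (c : ℝ) (k : ℕ) : ℝ :=
  (n - 1).factorial / (c ^ k * (n + k - 1).factorial)

def gpolyEigenvalue (n : ℕ) (c : ℝ) (r : ℕ) (m : Fin n → ℕ) : ℝ :=
  ∑ t ∈ multiIndicesDegLE n r, gpolyCoeff n c (∑ i, t i) * ∏ i, (m i + 1).ascFactorial (t i)

namespace Schrodinger

variable {n : ℕ} {W : WeylAlgebra n} (S : Schrodinger W)

theorem rep_a_pow_eVec (i : Fin n) (p : ℕ) (m : Fin n → ℕ) :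
    S.rep (W.a i ^ p) (eVec m) =
      (Real.sqrt ((m i).descFactorial p) : ℂ) • eVec (Function.update m i (m i - p)) := by
  induction p with
  | zero => simp
  | succ p ih =>
    rw [pow_succ', map_mul, Module.End.mul_apply, ih, map_smul, S.rep_a, smul_smul,
      Function.update_self, Function.update_idem, Nat.descFactorial_succ, Nat.sub_sub,
      Nat.cast_mul, Real.sqrt_mul (Nat.cast_nonneg _), Complex.ofReal_mul, mul_comm]

theorem rep_star_a_pow_eVec (i : Fin n) (p : ℕ) (m : Fin n → ℕ) :
    S.rep (star (W.a i) ^ p) (eVec m) =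
      (Real.sqrt ((m i + 1).ascFactorial p) : ℂ) • eVec (Function.update m i (m i + p)) := by
  induction p with
  | zero => simp
  | succ p ih =>
    rw [pow_succ', map_mul, Module.End.mul_apply, ih, map_smul, S.rep_astar, smul_smul,
      Function.update_self, Function.update_idem, Nat.ascFactorial_succ, ← add_assoc,
      Nat.cast_mul, Real.sqrt_mul (Nat.cast_nonneg _), Complex.ofReal_mul, add_right_comm]
    push_cast
    ring_nf

theorem rep_amon_eVec (t m : Fin n → ℕ) :
    S.rep (W.amon t) (eVec m) =
      (∏ i, (Real.sqrt ((m i).descFactorial (t i)) : ℂ)) • eVec (m - t) := by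
  rw [WeylAlgebra.amon, List.ofFn_eq_map, map_list_prod, List.map_map]
  exact list_prod_map_apply_eVec_of_mem _ (fun i k => (Real.sqrt (k.descFactorial (t i)) : ℂ))
    (fun i k => k - t i) (fun i m => S.rep_a_pow_eVec i (t i) m) (List.nodup_finRange n)
    List.mem_finRange m

theorem rep_star_amon_eVec (t m : Fin n → ℕ) :
    S.rep (star (W.amon t)) (eVec m) =
      (∏ i, (Real.sqrt ((m i + 1).ascFactorial (t i)) : ℂ)) • eVec (m + t) := by
  rw [WeylAlgebra.amon, List.ofFn_eq_map, star_list_prod, map_list_prod, List.map_map,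
    ← List.map_reverse, List.map_map]
  refine list_prod_map_apply_eVec_of_mem _
    (fun i k => (Real.sqrt ((k + 1).ascFactorial (t i)) : ℂ)) (fun i k => k + t i)
    (fun i m => ?_) (List.nodup_reverse.2 (List.nodup_finRange n))
    (fun i => List.mem_reverse.2 (List.mem_finRange i)) m
  simpa only [Function.comp_apply, ← star_pow] using S.rep_star_a_pow_eVec i (t i) m

theorem rep_amon_mul_star_amon_eVec (t m : Fin n → ℕ) :
    S.rep (W.amon t * star (W.amon t)) (eVec m) =
      ((∏ i, (m i + 1).ascFactorial (t i) : ℕ) : ℂ) • eVec m := by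
  rw [map_mul, Module.End.mul_apply, rep_star_amon_eVec, map_smul, rep_amon_eVec,
    add_tsub_cancel_right, smul_smul, ← Finset.prod_mul_distrib]
  congr 1
  push_cast
  refine Finset.prod_congr rfl fun i _ => ?_
  rw [Pi.add_apply, Nat.add_descFactorial_eq_ascFactorial, ← Complex.ofReal_mul,
    Real.mul_self_sqrt (Nat.cast_nonneg _), Complex.ofReal_natCast]

theorem rep_gpoly_eVec (c : ℝ) (r : ℕ) (m : Fin n → ℕ) :
    S.rep (W.gpoly c r) (eVec m) = (gpolyEigenvalue n c r m : ℂ) • eVec m := by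
  simp only [WeylAlgebra.gpoly, map_sum, map_smul, LinearMap.sum_apply, LinearMap.smul_apply,
    S.rep_amon_mul_star_amon_eVec, smul_smul, ← Finset.sum_smul, gpolyEigenvalue, gpolyCoeff,
    multiIndicesDegLE]
  push_cast
  rfl

end Schrodinger

section Diagonal

variable {n : ℕ} {T : Module.End ℂ (DSpace n)}

theorem apply_eq_mul_of_apply_eVec {μ : (Fin n → ℕ) → ℂ} (hT : ∀ m, T (eVec m) = μ m • eVec m)
    (φ : DSpace n) (m : Fin n → ℕ) : T φ m = μ m * φ m := by
  induction φ using Finsupp.induction_linear with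
  | zero => simp
  | add f g hf hg => simp [hf, hg, mul_add]
  | single m' d =>
    rw [← mul_one d, ← smul_eq_mul, ← Finsupp.smul_single, map_smul, ← eVec, hT]
    by_cases h : m' = m
    · subst h; simp [eVec, mul_comm]
    · simp [eVec, h]

theorem innerD_apply_le_of_apply_eVec {μ : (Fin n → ℕ) → ℝ}
    (hT : ∀ m, T (eVec m) = (μ m : ℂ) • eVec m) {φ : DSpace n} {B : ℝ}
    (hB : ∀ m ∈ φ.support, μ m ≤ B) :
    innerD φ (T φ) ≤ B * innerD φ φ := by
  have hnormSq (m : Fin n → ℕ) : (starRingEnd ℂ) (φ m) * φ m = (Complex.normSq (φ m) : ℂ) :=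
    Complex.normSq_eq_conj_mul_self.symm
  simp only [innerD, Finsupp.sum, apply_eq_mul_of_apply_eVec hT, Finset.mul_sum]
  refine Finset.sum_le_sum fun m hm => ?_
  calc (starRingEnd ℂ) (φ m) * ((μ m : ℂ) * φ m)
      = ((μ m * Complex.normSq (φ m) : ℝ) : ℂ) := by push_cast; rw [← hnormSq]; ring
    _ ≤ ((B * Complex.normSq (φ m) : ℝ) : ℂ) := by
      exact_mod_cast mul_le_mul_of_nonneg_right (hB m hm) (Complex.normSq_nonneg _)
    _ = (B : ℂ) * ((starRingEnd ℂ) (φ m) * φ m) := by push_cast; rw [hnormSq]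

end Diagonal

section Combinatorics

open scoped Nat

theorem Nat.prod_ascFactorial_le_ascFactorial_sum {ι : Type*} (x : ℕ) (s : Finset ι)
    (t : ι → ℕ) : ∏ i ∈ s, x.ascFactorial (t i) ≤ x.ascFactorial (∑ i ∈ s, t i) := by
  classical
  induction s using Finset.induction_on with
  | empty => simp
  | insert a s ha ih =>
    rw [prod_insert ha, sum_insert ha, ← Nat.ascFactorial_mul_ascFactorial]
    exact Nat.mul_le_mul_left _ (ih.trans (Nat.ascFactorial_le _ (Nat.le_add_right x _)))

theorem Nat.factorial_mul_ascFactorial_le (n k : ℕ) :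
    (n - 1)! * n.ascFactorial k ≤ (n + k - 1)! := by
  rcases n.eq_zero_or_pos with rfl | hn
  · cases k <;> simp [Nat.zero_ascFactorial]
  · exact (Nat.factorial_mul_ascFactorial' n k hn).le

theorem Finset.card_piAntidiag_univ {ι : Type*} [Fintype ι] [DecidableEq ι] (k : ℕ) :
    #(piAntidiag (univ : Finset ι) k) = (Fintype.card ι + k - 1).choose k := by
  rw [← map_sym_eq_piAntidiag, card_map, ← Sym.card_sym_eq_choose, ← Finset.card_univ]
  congr 1
  ext; simp

theorem sum_multiIndicesDegLE_comp_sum {β : Type*} [AddCommMonoid β] (n r : ℕ) (f : ℕ → β) :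
    ∑ t ∈ multiIndicesDegLE n r, f (∑ i, t i) =
      ∑ k ∈ range (r + 1), #(piAntidiag (univ : Finset (Fin n)) k) • f k := by
  rw [← sum_fiberwise_of_maps_to (g := fun t => ∑ i, t i) (t := range (r + 1))]
  · refine sum_congr rfl fun k hk => ?_
    rw [sum_congr rfl fun t ht => congrArg f (mem_filter.1 ht).2, sum_const]
    congr 2
    ext t
    simp only [multiIndicesDegLE, mem_filter, Fintype.mem_piFinset, mem_range, mem_piAntidiag,
      mem_univ]
    have hkr : k ≤ r := Nat.lt_succ_iff.1 (mem_range.1 hk)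
    refine ⟨fun h => ⟨h.2, fun _ _ => trivial⟩, fun h => ⟨⟨fun i => ?_, h.1.trans_le hkr⟩, h.1⟩⟩
    exact Nat.lt_succ_of_le
      (((single_le_sum (fun j _ => Nat.zero_le (t j)) (mem_univ i)).trans h.1.le).trans hkr)
  · intro t ht
    simp only [multiIndicesDegLE, mem_filter] at ht
    exact mem_range.2 (Nat.lt_succ_of_le ht.2)

theorem card_piAntidiag_mul_gpolyCoeff_le (n : ℕ) {c : ℝ} (hc : 0 < c) (k : ℕ) :
    #(piAntidiag (univ : Finset (Fin n)) k) * gpolyCoeff n c k ≤ (k ! * c ^ k)⁻¹ := by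
  have hcount : (#(piAntidiag (univ : Finset (Fin n)) k) * k ! : ℝ) = n.ascFactorial k := by
    rw [card_piAntidiag_univ, Fintype.card_fin, Nat.ascFactorial_eq_factorial_mul_choose']
    push_cast; ring
  have hfac : ((n - 1)! * n.ascFactorial k : ℝ) ≤ (n + k - 1)! := by
    exact_mod_cast Nat.factorial_mul_ascFactorial_le n k
  have hpos : (0 : ℝ) < (n + k - 1)! * (k ! * c ^ k) := by positivity
  calc #(piAntidiag (univ : Finset (Fin n)) k) * gpolyCoeff n c k
      = (n - 1)! * n.ascFactorial k / ((n + k - 1)! * (k ! * c ^ k)) := by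
        rw [gpolyCoeff, ← hcount]; field_simp
    _ ≤ (n + k - 1)! / ((n + k - 1)! * (k ! * c ^ k)) := by gcongr
    _ = (k ! * c ^ k)⁻¹ := by field_simp

theorem sum_range_choose_mul_pow_le (M N : ℕ) {x : ℝ} (hx0 : 0 ≤ x) (hx1 : x < 1) :
    ∑ k ∈ range N, ((M + k).choose k : ℝ) * x ^ k ≤ 1 / (1 - x) ^ (M + 1) := by
  have hsum := hasSum_choose_mul_geometric_of_norm_lt_one M (r := x)
    (by rwa [Real.norm_of_nonneg hx0])
  calc ∑ k ∈ range N, ((M + k).choose k : ℝ) * x ^ k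
      = ∑ k ∈ range N, ((k + M).choose M : ℝ) * x ^ k := by
        simp only [add_comm M, Nat.choose_symm_add]
    _ ≤ 1 / (1 - x) ^ (M + 1) := sum_le_hasSum _ (fun k _ => by positivity) hsum

theorem gpolyEigenvalue_le (n : ℕ) {c : ℝ} (hc : 1 < c) (r M : ℕ) {m : Fin n → ℕ}
    (hm : ∀ i, m i ≤ M) : gpolyEigenvalue n c r m ≤ (c / (c - 1)) ^ (M + 1) := by
  have hc0 : 0 < c := one_pos.trans hc
  have hgpolyCoeff (k : ℕ) : 0 ≤ gpolyCoeff n c k := by unfold gpolyCoeff; positivity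
  have hasc (t : Fin n → ℕ) :
      ∏ i, (m i + 1).ascFactorial (t i) ≤ (M + 1).ascFactorial (∑ i, t i) :=
    (prod_le_prod' fun i _ => Nat.ascFactorial_le _ (Nat.add_le_add_right (hm i) 1)).trans
      (Nat.prod_ascFactorial_le_ascFactorial_sum _ _ _)
  calc gpolyEigenvalue n c r m
      ≤ ∑ t ∈ multiIndicesDegLE n r,
          gpolyCoeff n c (∑ i, t i) * ((M + 1).ascFactorial (∑ i, t i) : ℝ) := by
        unfold gpolyEigenvalue
        gcongr with t
        · exact hgpolyCoeff _
        · exact_mod_cast hasc t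
    _ = ∑ k ∈ range (r + 1),
          #(piAntidiag (univ : Finset (Fin n)) k) •
            (gpolyCoeff n c k * ((M + 1).ascFactorial k : ℝ)) :=
        sum_multiIndicesDegLE_comp_sum n r fun k => gpolyCoeff n c k * ((M + 1).ascFactorial k : ℝ)
    _ ≤ ∑ k ∈ range (r + 1), ((M + k).choose k : ℝ) * (1 / c) ^ k := by
        gcongr with k
        rw [nsmul_eq_mul, ← mul_assoc]
        calc _ ≤ (k ! * c ^ k)⁻¹ * ((M + 1).ascFactorial k : ℝ) := by
              gcongr; exact card_piAntidiag_mul_gpolyCoeff_le n hc0 k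
          _ = ((M + k).choose k : ℝ) * (1 / c) ^ k := by
              rw [Nat.ascFactorial_eq_factorial_mul_choose, one_div_pow]
              push_cast
              field_simp
    _ ≤ 1 / (1 - 1 / c) ^ (M + 1) :=
        sum_range_choose_mul_pow_le M (r + 1) (by positivity) ((div_lt_one hc0).2 hc)
    _ = (c / (c - 1)) ^ (M + 1) := by
        rw [one_sub_div hc0.ne', one_div, ← inv_pow, inv_div]

end Combinatorics

theorem gpoly_expectation_bound_general {n : ℕ} (c : ℝ) (hc : 1 < c) (M : ℕ)
    (W : WeylAlgebra n) (S : Schrodinger W) (φ : DSpace n)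
    (hsupp : ∀ m ∈ φ.support, ∀ i, m i ≤ M) (hnorm : innerD φ φ = 1) (r : ℕ) :
    innerD φ (S.rep (W.gpoly c r) φ) ≤ (((c / (c - 1)) ^ (M + 1) : ℝ) : ℂ) := by
  have h := innerD_apply_le_of_apply_eVec (S.rep_gpoly_eVec c r)
    fun m hm => gpolyEigenvalue_le n hc r M (hsupp m hm)
  rwa [hnorm, mul_one] at h

/-- If `c > 1` and `Φ` is a normalized vector supported on number
states with all entries at most `M`, then `⟨Φ, π(g^r_c) Φ⟩ ≤ (c/(c-1))^{M+1}` for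
every `r`. -/
theorem gpoly_expectation_bound {n : ℕ} (hn : 1 ≤ n) (c : ℝ) (hc : 1 < c) (M : ℕ)
    (W : WeylAlgebra n) (S : Schrodinger W) (φ : DSpace n)
    (hsupp : ∀ m ∈ φ.support, ∀ i, m i ≤ M) (hnorm : innerD φ φ = 1) (r : ℕ) :
    innerD φ (S.rep (W.gpoly c r) φ) ≤ (((c / (c - 1)) ^ (M + 1) : ℝ) : ℂ) :=
  gpoly_expectation_bound_general c hc M W S φ hsupp hnorm r
end
end

section
/- For every a ∈ ℝ and every k ∈ ℕ, the series Σ_{l=0}^{∞} (a^l / l!) · Γ((l+k+1)/2) converges, and its sum equals the (finite) integral ∫_{−∞}^{∞} e^{a|x|} |x|^k e^{−x²} dx. In particular (the case a = 0), ∫_{−∞}^{∞} |x|^k e^{−x²} dx = Γ((k+1)/2). -/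
/-!
Expand `exp (a |x|)` in its power series. Termwise, `∫ |x|^(l+k) e^{-x²} = Γ((l+k+1)/2)`
by the substitution `x² = t` on each half-line, and summing under the integral is justified by
dominated convergence with dominating function `e^{|a| |x|} |x|^k e^{-x²}`, which is integrable
because `|a| |x| - x² ≤ a²/2 - x²/2`.
-/
open MeasureTheory Real

open scoped Nat

lemma hasSum_pow_div_factorial_mul_pow_add (b t c : ℝ) (k : ℕ) :
    HasSum (fun l : ℕ => b ^ l / l ! * (t ^ (l + k) * c)) (exp (b * t) * t ^ k * c) := by
  have h := ((NormedSpace.expSeries_div_hasSum_exp (b * t)).mul_right (t ^ k * c))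
  rw [← exp_eq_exp_ℝ, ← mul_assoc] at h
  refine h.congr_fun fun l => ?_
  rw [mul_pow, pow_add]
  ring

lemma integral_abs_pow_mul_exp_neg_sq (m : ℕ) :
    ∫ x : ℝ, |x| ^ m * exp (-x ^ 2) = Gamma ((m + 1) / 2) := by
  have hm : (-1 : ℝ) < m := neg_one_lt_zero.trans_le m.cast_nonneg
  calc ∫ x : ℝ, |x| ^ m * exp (-x ^ 2)
      = ∫ x : ℝ, (fun y => y ^ m * exp (-y ^ 2)) |x| := by simp only [sq_abs]
    _ = 2 * ∫ x in Set.Ioi (0 : ℝ), x ^ (m : ℝ) * exp (-x ^ (2 : ℝ)) := by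
        simp only [rpow_natCast, rpow_two]
        exact integral_comp_abs (f := fun y => y ^ m * exp (-y ^ 2))
    _ = Gamma ((m + 1) / 2) := by
        rw [integral_rpow_mul_exp_neg_rpow two_pos hm]
        ring

lemma integrable_abs_pow_mul_exp_neg_mul_sq {b : ℝ} (hb : 0 < b) (m : ℕ) :
    Integrable fun x : ℝ => |x| ^ m * exp (-b * x ^ 2) := by
  refine (integrable_rpow_mul_exp_neg_mul_sq hb
    (neg_one_lt_zero.trans_le m.cast_nonneg)).norm.congr (.of_forall fun x => ?_)
  simp [abs_of_pos (exp_pos _)]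

lemma integrable_exp_mul_abs_mul_abs_pow_mul_exp_neg_sq (b : ℝ) (k : ℕ) :
    Integrable fun x : ℝ => exp (b * |x|) * |x| ^ k * exp (-x ^ 2) := by
  refine ((integrable_abs_pow_mul_exp_neg_mul_sq (b := 1 / 2) one_half_pos k).const_mul
    (exp (b ^ 2 / 2))).mono' (by fun_prop) (.of_forall fun x => ?_)
  have hexp : exp (b * |x|) * exp (-x ^ 2) ≤ exp (b ^ 2 / 2) * exp (-(1 / 2) * x ^ 2) := by
    rw [← exp_add, ← exp_add, exp_le_exp]
    nlinarith [sq_nonneg (|x| - b), sq_abs x]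
  rw [norm_of_nonneg (by positivity)]
  calc exp (b * |x|) * |x| ^ k * exp (-x ^ 2) = exp (b * |x|) * exp (-x ^ 2) * |x| ^ k := by ring
    _ ≤ exp (b ^ 2 / 2) * exp (-(1 / 2) * x ^ 2) * |x| ^ k := by gcongr
    _ = _ := by ring

lemma hasSum_integral_pow_div_factorial_mul_abs_pow (a : ℝ) (k : ℕ) :
    HasSum (fun l : ℕ => ∫ x : ℝ, a ^ l / l ! * (|x| ^ (l + k) * exp (-x ^ 2)))
      (∫ x : ℝ, exp (a * |x|) * |x| ^ k * exp (-x ^ 2)) := by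
  refine hasSum_integral_of_dominated_convergence
    (fun l x => |a| ^ l / l ! * (|x| ^ (l + k) * exp (-x ^ 2)))
    (fun l => by fun_prop) (fun l => .of_forall fun x => ?_)
    (.of_forall fun x => (hasSum_pow_div_factorial_mul_pow_add _ _ _ k).summable) ?_
    (.of_forall fun x => hasSum_pow_div_factorial_mul_pow_add _ _ _ k)
  · simp [abs_of_pos (exp_pos _)]
  · simp_rw [fun x : ℝ => (hasSum_pow_div_factorial_mul_pow_add |a| |x| (exp (-x ^ 2)) k).tsum_eq]
    exact integrable_exp_mul_abs_mul_abs_pow_mul_exp_neg_sq |a| k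

/-- For every `a ∈ ℝ` and `k ∈ ℕ`, the series
`∑_l (a^l/l!)·Γ((l+k+1)/2)` converges with sum the finite integral
`∫ e^{a|x|}|x|^k e^{-x²} dx`; in particular (`a = 0`),
`∫ |x|^k e^{-x²} dx = Γ((k+1)/2)`. -/
theorem series_eq_integral_gamma (a : ℝ) (k : ℕ) :
    (Integrable fun x : ℝ => Real.exp (a * |x|) * |x| ^ k * Real.exp (-x ^ 2)) ∧
    HasSum (fun l : ℕ => a ^ l / (Nat.factorial l : ℝ) *
        Real.Gamma (((l : ℝ) + (k : ℝ) + 1) / 2))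
      (∫ x : ℝ, Real.exp (a * |x|) * |x| ^ k * Real.exp (-x ^ 2)) ∧
    (∫ x : ℝ, |x| ^ k * Real.exp (-x ^ 2)) = Real.Gamma (((k : ℝ) + 1) / 2) := by
  refine ⟨integrable_exp_mul_abs_mul_abs_pow_mul_exp_neg_sq a k, ?_,
    integral_abs_pow_mul_exp_neg_sq k⟩
  convert hasSum_integral_pow_div_factorial_mul_abs_pow a k using 2 with l
  rw [integral_const_mul, integral_abs_pow_mul_exp_neg_sq, Nat.cast_add]
end

section
/- Fix k ∈ ℕ and define g : ℝ → ℝ by g(x) = e^{−x} · Σ_{j=0}^{∞} ((j+k)! / (j!)²) x^j (the series converges for all x ∈ ℝ). Then g is infinitely differentiable, for every m with 0 ≤ m ≤ k its m-th derivative is g^{(m)}(x) = (k!/(k−m)!) · e^{−x} · Σ_{j=0}^{∞} ((j+k)! / (j!·(j+m)!)) x^j, and g^{(m)} is identically zero for every m > k. -/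
open Finset

noncomputable def q19 (k r : ℕ) (x : ℝ) : ℝ :=
  ∑ i ∈ Finset.range (r + 1), (k.choose (r - i) : ℝ) * x ^ i / i.factorial

lemma hasSum_choose19 (r : ℕ) (x : ℝ) :
    HasSum (fun j : ℕ => (j.choose r : ℝ) * x ^ j / j.factorial)
      (x ^ r / r.factorial * Real.exp x) := by
  have he : HasSum (fun t : ℕ => x ^ t / t.factorial) (Real.exp x) := by
    rw [Real.exp_eq_exp_ℝ]
    exact NormedSpace.expSeries_div_hasSum_exp x
  have h := he.mul_left (x ^ r / r.factorial)
  have hinj : Function.Injective (fun t : ℕ => t + r) := add_left_injective r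
  rw [show (fun t : ℕ => x ^ r / r.factorial * (x ^ t / t.factorial)) =
      (fun j : ℕ => (j.choose r : ℝ) * x ^ j / j.factorial) ∘ (fun t : ℕ => t + r) from ?_] at h
  · refine (hinj.hasSum_iff ?_).mp h
    intro j hj
    have : j < r := by
      by_contra hc
      exact hj ⟨j - r, by show j - r + r = j; omega⟩
    simp [Nat.choose_eq_zero_of_lt this]
  · funext t
    have hc : ((t + r).choose r : ℝ) * r.factorial * t.factorial = (t + r).factorial := by
      have h0 := Nat.choose_mul_factorial_mul_factorial (by omega : r ≤ t + r)
      rw [Nat.add_sub_cancel] at h0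
      exact_mod_cast h0
    simp only [Function.comp]
    have h1 : (r.factorial : ℝ) ≠ 0 := Nat.cast_ne_zero.mpr r.factorial_ne_zero
    have h2 : (t.factorial : ℝ) ≠ 0 := Nat.cast_ne_zero.mpr t.factorial_ne_zero
    have h3 : ((t + r).factorial : ℝ) ≠ 0 := Nat.cast_ne_zero.mpr (t + r).factorial_ne_zero
    field_simp
    rw [pow_add, ← hc]
    ring

lemma hasSum_vdm19 (k r : ℕ) (x : ℝ) :
    HasSum (fun j : ℕ => ((k + j).choose r : ℝ) * x ^ j / j.factorial)
      (Real.exp x * q19 k r x) := by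
  have key : ∀ j : ℕ, ((k + j).choose r : ℝ) * x ^ j / j.factorial =
      ∑ i ∈ range (r + 1), (k.choose i : ℝ) * ((j.choose (r - i) : ℝ) * x ^ j / j.factorial) := by
    intro j
    rw [Nat.add_choose_eq, Finset.Nat.sum_antidiagonal_eq_sum_range_succ_mk]
    push_cast
    rw [Finset.sum_mul, Finset.sum_div]
    exact Finset.sum_congr rfl fun i _ => by ring
  have h : HasSum (fun j : ℕ => ((k + j).choose r : ℝ) * x ^ j / j.factorial)
      (∑ i ∈ range (r + 1), (k.choose i : ℝ) * (x ^ (r - i) / (r - i).factorial * Real.exp x)) := by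
    simp only [key]
    exact hasSum_sum fun i _ => (hasSum_choose19 (r - i) x).mul_left _
  convert h using 1
  rw [q19, ← Finset.sum_range_reflect, Finset.mul_sum]
  refine Finset.sum_congr rfl fun i hi => ?_
  simp only [mem_range] at hi
  rw [show r + 1 - 1 - i = r - i from by omega, show r - (r - i) = i from by omega]
  ring

lemma hasSum_main19 (k m : ℕ) (hm : m ≤ k) (x : ℝ) :
    HasSum (fun j : ℕ => ((j + k).factorial : ℝ) /
        ((j.factorial : ℝ) * ((j + m).factorial : ℝ)) * x ^ j)
      ((k - m).factorial * (Real.exp x * q19 k (k - m) x)) := by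
  have h := (hasSum_vdm19 k (k - m) x).mul_left ((k - m).factorial : ℝ)
  convert h using 2 with j
  case e'_3 => rfl
  have hc : ((k + j).choose (k - m) : ℝ) * (k - m).factorial * (j + m).factorial
      = ((j + k).factorial : ℝ) := by
    have := Nat.choose_mul_factorial_mul_factorial (by omega : k - m ≤ k + j)
    rw [show k + j - (k - m) = j + m from by omega] at this
    rw [show j + k = k + j from by omega]
    exact_mod_cast this
  have h2 : (j.factorial : ℝ) ≠ 0 := Nat.cast_ne_zero.mpr j.factorial_ne_zero
  have h4 : ((j + m).factorial : ℝ) ≠ 0 := Nat.cast_ne_zero.mpr (j + m).factorial_ne_zero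
  field_simp
  rw [← hc]
  ring

lemma hasSum_main019 (k : ℕ) (x : ℝ) :
    HasSum (fun j : ℕ => ((j + k).factorial : ℝ) / (j.factorial : ℝ) ^ 2 * x ^ j)
      (k.factorial * (Real.exp x * q19 k k x)) := by
  have h := hasSum_main19 k 0 (Nat.zero_le k) x
  simpa [sq] using h

lemma q19_hasDerivAt (k r : ℕ) (x : ℝ) : HasDerivAt (q19 k (r + 1)) (q19 k r x) x := by
  have h : ∀ i ∈ range (r + 2), HasDerivAt (fun x : ℝ => (k.choose (r + 1 - i) : ℝ) * x ^ i / i.factorial)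
      ((k.choose (r + 1 - i) : ℝ) * (i * x ^ (i - 1)) / i.factorial) x := by
    intro i _
    simpa [mul_div_assoc, mul_comm, mul_left_comm] using
      (((hasDerivAt_pow i x).const_mul ((k.choose (r + 1 - i) : ℝ))).div_const (i.factorial : ℝ))
  have H : HasDerivAt (fun x : ℝ => ∑ i ∈ range (r + 2), (k.choose (r + 1 - i) : ℝ) * x ^ i / i.factorial)
      (∑ i ∈ range (r + 2), (k.choose (r + 1 - i) : ℝ) * (i * x ^ (i - 1)) / i.factorial) x :=
    HasDerivAt.fun_sum h
  convert H using 1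
  case e'_8 => rfl
  rw [q19, Finset.sum_range_succ'
    (fun i => (k.choose (r + 1 - i) : ℝ) * ((i : ℝ) * x ^ (i - 1)) / i.factorial) (r + 1)]
  simp only [Nat.cast_zero, zero_mul, mul_zero, zero_div, add_zero]
  refine Finset.sum_congr rfl fun i _ => ?_
  rw [show r + 1 - (i + 1) = r - i from by omega, Nat.factorial_succ,
    Nat.add_sub_cancel]
  push_cast
  have h1 : ((i : ℝ) + 1) ≠ 0 := by positivity
  have h2 : (i.factorial : ℝ) ≠ 0 := Nat.cast_ne_zero.mpr i.factorial_ne_zero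
  field_simp

lemma q19_zero' (k : ℕ) (x : ℝ) : q19 k 0 x = 1 := by simp [q19]

lemma contDiff_q19 (k r : ℕ) : ContDiff ℝ (⊤ : ℕ∞) (q19 k r) := by
  unfold q19
  refine ContDiff.sum fun i _ => ?_
  exact (contDiff_const.mul (contDiff_id.pow i)).div_const _



/-- For fixed `k`, the function
`g(x) = e^{-x} ∑_j ((j+k)!/(j!)²) x^j` (the series converges for all `x`) is smooth;
for `m ≤ k` its `m`-th derivative equals
`(k!/(k-m)!)·e^{-x} ∑_j ((j+k)!/(j!·(j+m)!)) x^j`, and for `m > k` it vanishes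
identically. -/
theorem derivatives_of_g (k : ℕ) (g : ℝ → ℝ)
    (hg : g = fun x : ℝ => Real.exp (-x) *
      ∑' j : ℕ, ((Nat.factorial (j + k) : ℝ) / (Nat.factorial j : ℝ) ^ 2) * x ^ j) :
    (∀ x : ℝ, Summable fun j : ℕ =>
      ((Nat.factorial (j + k) : ℝ) / (Nat.factorial j : ℝ) ^ 2) * x ^ j) ∧
    ContDiff ℝ (⊤ : ℕ∞) g ∧
    (∀ m : ℕ, m ≤ k → iteratedDeriv m g = fun x : ℝ =>
      ((Nat.factorial k : ℝ) / (Nat.factorial (k - m) : ℝ)) *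
        (Real.exp (-x) * ∑' j : ℕ,
          ((Nat.factorial (j + k) : ℝ) /
            ((Nat.factorial j : ℝ) * (Nat.factorial (j + m) : ℝ))) * x ^ j)) ∧
    (∀ m : ℕ, m > k → iteratedDeriv m g = 0) := by
  have hgq : g = fun x => (k.factorial : ℝ) * q19 k k x := by
    rw [hg]; funext x
    rw [(hasSum_main019 k x).tsum_eq, Real.exp_neg]
    field_simp
  have hiter : ∀ m ≤ k, iteratedDeriv m g = fun x => (k.factorial : ℝ) * q19 k (k - m) x := by
    intro m hm
    induction m with
    | zero => simpa [iteratedDeriv_zero] using hgq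
    | succ n ih =>
      rw [iteratedDeriv_succ, ih (by omega)]
      funext x
      have hd : HasDerivAt (fun x => (k.factorial : ℝ) * q19 k (k - n) x)
          ((k.factorial : ℝ) * q19 k (k - (n + 1)) x) x := by
        have := ((q19_hasDerivAt k (k - (n + 1)) x).const_mul (k.factorial : ℝ))
        rwa [show k - (n + 1) + 1 = k - n from by omega] at this
      exact hd.deriv
  refine ⟨fun x => (hasSum_main019 k x).summable, ?_, ?_, ?_⟩
  · rw [hgq]; exact contDiff_const.mul (contDiff_q19 k k)
  · intro m hm
    rw [hiter m hm]
    funext x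
    rw [(hasSum_main19 k m hm x).tsum_eq, Real.exp_neg]
    have h1 : ((k - m).factorial : ℝ) ≠ 0 := Nat.cast_ne_zero.mpr (k - m).factorial_ne_zero
    field_simp
  · have hk : iteratedDeriv (k + 1) g = 0 := by
      rw [iteratedDeriv_succ, hiter k le_rfl]
      funext x
      simp [Nat.sub_self, q19_zero']
    intro m hm
    obtain ⟨s, rfl⟩ : ∃ s, m = (k + 1) + s := ⟨m - (k + 1), by omega⟩
    induction s with
    | zero => simpa using hk
    | succ t ih =>
      rw [show k + 1 + (t + 1) = (k + 1 + t) + 1 from rfl, iteratedDeriv_succ, ih (by omega)]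
      funext x
      show deriv (fun _ => (0 : ℝ)) x = 0
      exact deriv_const x 0
end
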